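/- arXiv:1904.08532 — 4 statements merged into one kernel-verified Lean document; each statement's English description precedes it below -/
import Mathlib

section
/- There is an absolute constant c > 0 such that the following holds. Let q > 2, let 0 < θ < 1, let T be a linear operator with nonzero singular values s_1 ≥ ... ≥ s_r, and set m = (cθ)^{2q/(q−2)}·srank_q(T) (assumed to be a positive integer with m < r). Define the truncated values s̃_i = min{s_i, ‖T‖_{S_2}/√m}. Then ∑_{i=1}^r s̃_i^2 ≥ (1 − θ²)·‖T‖_{S_2}². -/
/-!
Take `c = 1` and `τ = ‖s‖₂ / √m`. Truncating at `τ` only changes the values above `τ`; each of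
their squares exceeds `τ²` while all squares add up to `m τ²`, so there are at most `m` of them.
By the power-mean (Hölder) inequality the squared mass carried by at most `m` indices is at most
`‖s‖_q² m^{1 - 2/q}`, and the choice of `m` makes this exactly `θ² ‖s‖₂²`.
-/

open Finset

variable {ι : Type*}

namespace Real

theorem sum_le_rpow_sum_rpow_mul_card_rpow {s : Finset ι} {f : ι → ℝ} {p : ℝ} (hp : 1 ≤ p)
    (hf : ∀ i ∈ s, 0 ≤ f i) :
    ∑ i ∈ s, f i ≤ (∑ i ∈ s, f i ^ p) ^ (1 / p) * (#s : ℝ) ^ (1 - 1 / p) := by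
  have hp0 : 0 < p := by linarith
  have hsum : 0 ≤ ∑ i ∈ s, f i := sum_nonneg hf
  have hsump : 0 ≤ ∑ i ∈ s, f i ^ p := sum_nonneg fun i hi => rpow_nonneg (hf i hi) p
  have hpow := rpow_sum_le_const_mul_sum_rpow_of_nonneg s hp hf
  calc ∑ i ∈ s, f i = ((∑ i ∈ s, f i) ^ p) ^ (1 / p) := by
        rw [← rpow_mul hsum, mul_one_div_cancel hp0.ne', rpow_one]
    _ ≤ ((#s : ℝ) ^ (p - 1) * ∑ i ∈ s, f i ^ p) ^ (1 / p) := by gcongr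
    _ = (∑ i ∈ s, f i ^ p) ^ (1 / p) * (#s : ℝ) ^ (1 - 1 / p) := by
        rw [mul_rpow (by positivity) hsump, ← rpow_mul (by positivity), mul_comm]
        congr 2
        field_simp

theorem sum_sq_le_rpow_sum_rpow_mul_card_rpow {s : Finset ι} {f : ι → ℝ} {q : ℝ} (hq : 2 ≤ q)
    (hf : ∀ i ∈ s, 0 ≤ f i) :
    ∑ i ∈ s, f i ^ 2 ≤ (∑ i ∈ s, f i ^ q) ^ (2 / q) * (#s : ℝ) ^ ((q - 2) / q) := by
  have hq0 : q ≠ 0 := by positivity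
  have hsq : ∀ i ∈ s, (f i ^ 2) ^ (q / 2) = f i ^ q := fun i hi => by
    rw [← rpow_natCast, ← rpow_mul (hf i hi)]
    congr 1
    push_cast
    ring
  have h := sum_le_rpow_sum_rpow_mul_card_rpow (s := s) (f := fun i => f i ^ 2) (p := q / 2)
    (by linarith) fun i _ => sq_nonneg (f i)
  rw [sum_congr rfl hsq] at h
  convert h using 3 <;> field_simp

end Real

namespace Finset

theorem card_filter_lt_le_of_sum_sq_le {s : Finset ι} {f : ι → ℝ} {τ : ℝ} {m : ℕ}
    (hτ : 0 ≤ τ) (h : ∑ i ∈ s, f i ^ 2 ≤ m * τ ^ 2) : #{i ∈ s | τ < f i} ≤ m := by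
  set B := {i ∈ s | τ < f i}
  rcases B.eq_empty_or_nonempty with hB | hB
  · simp [hB]
  have hlt : (#B : ℝ) * τ ^ 2 < m * τ ^ 2 := calc
    (#B : ℝ) * τ ^ 2 = ∑ i ∈ B, τ ^ 2 := by rw [sum_const, nsmul_eq_mul]
    _ < ∑ i ∈ B, f i ^ 2 := sum_lt_sum_of_nonempty hB fun i hi => by
        have := (mem_filter.mp hi).2
        gcongr
    _ ≤ ∑ i ∈ s, f i ^ 2 :=
        sum_le_sum_of_subset_of_nonneg (filter_subset _ s) fun i _ _ => sq_nonneg (f i)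
    _ ≤ m * τ ^ 2 := h
  exact_mod_cast (lt_of_mul_lt_mul_right hlt (sq_nonneg τ)).le

theorem sum_sq_sub_sum_min_sq_le (s : Finset ι) (f : ι → ℝ) (τ : ℝ) :
    ∑ i ∈ s, f i ^ 2 - ∑ i ∈ s, min (f i) τ ^ 2 ≤ ∑ i ∈ s with τ < f i, f i ^ 2 := by
  rw [← sum_sub_distrib, sum_filter]
  refine sum_le_sum fun i _ => ?_
  split_ifs with h
  · nlinarith [sq_nonneg (min (f i) τ)]
  · rw [min_eq_left (not_lt.mp h), sub_self]

end Finset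

noncomputable def stableRank [Fintype ι] (q : ℝ) (s : ι → ℝ) : ℝ :=
  ((∑ i, s i ^ 2) ^ ((1 : ℝ) / 2) / (∑ i, s i ^ q) ^ ((1 : ℝ) / q)) ^ (2 * q / (q - 2))

theorem rpow_mul_rpow_eq_of_eq_rpow_mul_stableRank [Fintype ι] {q x m : ℝ}
    {s : ι → ℝ} (hq : 2 < q) (hx : 0 ≤ x) (hs : 0 < ∑ i, s i ^ q)
    (hm : m = x ^ (2 * q / (q - 2)) * stableRank q s) :
    (∑ i, s i ^ q) ^ (2 / q) * m ^ ((q - 2) / q) = x ^ 2 * ∑ i, s i ^ 2 := by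
  rw [stableRank] at hm
  set A := ∑ i, s i ^ 2
  set B := ∑ i, s i ^ q
  have hq2 : q - 2 ≠ 0 := by linarith
  have hA : 0 ≤ A := sum_nonneg fun i _ => sq_nonneg (s i)
  have hB : B ^ (2 / q) ≠ 0 := (Real.rpow_pos_of_pos hs _).ne'
  have hX : 0 ≤ A ^ ((1 : ℝ) / 2) / B ^ ((1 : ℝ) / q) := by positivity
  have hX2 : (A ^ ((1 : ℝ) / 2) / B ^ ((1 : ℝ) / q)) ^ 2 = A / B ^ (2 / q) := by
    rw [div_pow, ← Real.sqrt_eq_rpow, Real.sq_sqrt hA, ← Real.rpow_natCast,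
      ← Real.rpow_mul hs.le]
    congr 2
    push_cast
    ring
  have hm' : m ^ ((q - 2) / q) = x ^ 2 * (A / B ^ (2 / q)) := by
    rw [hm, ← Real.mul_rpow hx hX, ← Real.rpow_mul (mul_nonneg hx hX),
      show 2 * q / (q - 2) * ((q - 2) / q) = 2 by field_simp, Real.rpow_two, mul_pow, hX2]
  rw [hm']
  field_simp

/-- there is an absolute constant `c > 0` such that for every `q > 2`,
`θ ∈ (0,1)` and operator with non-increasing positive singular values `s : Fin r → ℝ`,
if `m = (cθ)^{2q/(q-2)}·srank_q(T)` is a positive integer with `m < r`, then the truncated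
values `s̃_i = min(s_i, ‖T‖_{S_2}/√m)` satisfy `∑ s̃_i² ≥ (1-θ²)‖T‖_{S_2}²`. -/
theorem truncated_singular_values_sum :
    ∃ c : ℝ, 0 < c ∧ ∀ (q θ : ℝ), 2 < q → 0 < θ → θ < 1 →
      ∀ (r : ℕ) (s : Fin r → ℝ), Antitone s → (∀ i, 0 < s i) →
      ∀ m : ℕ, 0 < m → m < r →
      (m : ℝ) = (c * θ) ^ (2 * q / (q - 2)) *
        (((∑ i, s i ^ 2) ^ ((1 : ℝ) / 2) / (∑ i, s i ^ q) ^ ((1 : ℝ) / q)) ^ (2 * q / (q - 2))) →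
      (1 - θ ^ 2) * (∑ i, s i ^ 2) ≤
        ∑ i, (min (s i) ((∑ j, s j ^ 2) ^ ((1 : ℝ) / 2) / Real.sqrt m)) ^ 2 := by
  refine ⟨1, one_pos, fun q θ hq hθ _ r s _ hs m hm0 hmr hm => ?_⟩
  have : Nonempty (Fin r) := ⟨⟨m, hmr⟩⟩
  set τ := (∑ j, s j ^ 2) ^ ((1 : ℝ) / 2) / Real.sqrt m
  have hτ : ∑ i, s i ^ 2 ≤ m * τ ^ 2 := by
    have hm : (0 : ℝ) < m := by exact_mod_cast hm0
    rw [div_pow, ← Real.sqrt_eq_rpow, Real.sq_sqrt (sum_nonneg fun i _ => sq_nonneg (s i)),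
      Real.sq_sqrt hm.le, mul_div_cancel₀ _ hm.ne']
  have hcard := card_filter_lt_le_of_sum_sq_le (s := univ) (by positivity) hτ
  have hsq : ∀ i ∈ univ, 0 ≤ s i ^ q := fun i _ => Real.rpow_nonneg (hs i).le q
  have hkey := rpow_mul_rpow_eq_of_eq_rpow_mul_stableRank hq (by positivity)
    (sum_pos (fun i _ => Real.rpow_pos_of_pos (hs i) q) univ_nonempty) hm
  have hloss : ∑ i, s i ^ 2 - ∑ i, min (s i) τ ^ 2 ≤ θ ^ 2 * ∑ i, s i ^ 2 := calc
    _ ≤ ∑ i with τ < s i, s i ^ 2 := sum_sq_sub_sum_min_sq_le _ _ _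
    _ ≤ (∑ i with τ < s i, s i ^ q) ^ (2 / q) * (#{i | τ < s i} : ℝ) ^ ((q - 2) / q) :=
      Real.sum_sq_le_rpow_sum_rpow_mul_card_rpow hq.le fun i _ => (hs i).le
    _ ≤ (∑ i, s i ^ q) ^ (2 / q) * (m : ℝ) ^ ((q - 2) / q) := by
      gcongr
      · exact Real.rpow_nonneg (sum_nonneg hsq) _
      · exact sum_nonneg fun i _ => hsq i (mem_univ i)
      · exact fun i hi _ => hsq i hi
      · exact subset_univ _
    _ = θ ^ 2 * ∑ i, s i ^ 2 := by rw [hkey, one_mul]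
  linarith
end

section
/- Let X be a random vector in R^n with a density, let S : R^n → R^k (k ≤ n) have rank k, with singular value decomposition S = U D P_k V where U ∈ O(k), V ∈ O(n), D is the diagonal matrix of singular values, and P_k the projection onto the first k coordinates. Set E = V*(R^k). Then for every compact set K ⊂ R^k, P(SX ∈ K) = P(P_E X ∈ V* D^{-1} U* K), and consequently P(SX ∈ K) ≤ vol(K)·‖f_{P_E X}‖_∞ / det(SS*)^{1/2}. -/
/-!
Write `S = (U D) (P_k V)` with `U D` invertible. The matrix `T = Vᵀ P_kᵀ D⁻¹ Uᵀ` satisfies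
`S T = 1` and `T S = Vᵀ P_kᵀ P_k V = P_E`, so `P_E X = T (S X)` lies in `T K` exactly when
`S X ∈ K`. For the bound, `S X ∈ K` iff `P_k V X ∈ (U D)⁻¹ K`, a set of volume
`vol K / |det (U D)| = vol K / det D = vol K / det(S Sᵀ)^{1/2}`, on which the density of
`P_k V X` is at most `C`.
-/

open MeasureTheory Matrix
open scoped BigOperators

/-- The coordinate projection `P_k : ℝ^n → ℝ^k` onto the first `k` coordinates, as a matrix. -/
def coordProj (k n : ℕ) : Matrix (Fin k) (Fin n) ℝ :=
  Matrix.of fun i j => if (i : ℕ) = (j : ℕ) then 1 else 0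

theorem coordProj_mul_transpose {k n : ℕ} (hkn : k ≤ n) :
    coordProj k n * (coordProj k n)ᵀ = 1 := by
  have hP : coordProj k n = (1 : Matrix (Fin n) (Fin n) ℝ).submatrix (Fin.castLE hkn) id := by
    ext i j
    simp [coordProj, one_apply, Fin.ext_iff]
  rw [hP, transpose_submatrix, transpose_one, ← submatrix_mul _ _ _ _ _ Function.bijective_id,
    Matrix.one_mul, submatrix_one _ (Fin.castLE_injective hkn)]

theorem Matrix.IsDiag.det_pos {m R : Type*} [Fintype m] [DecidableEq m] [CommRing R]
    [PartialOrder R] [IsStrictOrderedRing R] {D : Matrix m m R} (hD : D.IsDiag)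
    (hpos : ∀ i, 0 < D i i) : 0 < D.det := by
  rw [← hD.diagonal_diag, det_diagonal]
  exact Finset.prod_pos fun i _ => hpos i

section SVD

variable {R m n : Type*} [CommRing R] [Fintype m] [Fintype n] [DecidableEq m]
  {U D : Matrix m m R} {P : Matrix m n R} {V : Matrix n n R}

theorem det_mul_self_eq_one_of_mul_transpose_eq_one (hU : U * Uᵀ = 1) : U.det * U.det = 1 := by
  simpa [det_mul] using congrArg det hU

/-- `Vᵀ Pᵀ D⁻¹ Uᵀ` is the Moore–Penrose pseudoinverse of `U D P V`. -/
theorem svd_mul_pseudoinverse [DecidableEq n] (hU : U * Uᵀ = 1) (hV : V * Vᵀ = 1) (hP : P * Pᵀ = 1)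
    (hD : IsUnit D.det) : U * D * P * V * (Vᵀ * Pᵀ * D⁻¹ * Uᵀ) = 1 := by
  simp only [Matrix.mul_assoc]
  rw [← Matrix.mul_assoc V, hV, Matrix.one_mul, ← Matrix.mul_assoc P, hP, Matrix.one_mul,
    ← Matrix.mul_assoc D, mul_nonsing_inv _ hD, Matrix.one_mul, hU]

theorem pseudoinverse_mul_svd (hU : U * Uᵀ = 1) (hD : IsUnit D.det) :
    Vᵀ * Pᵀ * D⁻¹ * Uᵀ * (U * D * P * V) = Vᵀ * Pᵀ * P * V := by
  simp only [Matrix.mul_assoc]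
  rw [← Matrix.mul_assoc Uᵀ, mul_eq_one_comm.mp hU, Matrix.one_mul, ← Matrix.mul_assoc D⁻¹,
    nonsing_inv_mul _ hD, Matrix.one_mul]

theorem det_svd_mul_transpose [DecidableEq n] (hU : U * Uᵀ = 1) (hV : V * Vᵀ = 1) (hP : P * Pᵀ = 1) :
    (U * D * P * V * (U * D * P * V)ᵀ).det = D.det ^ 2 := by
  simp only [transpose_mul, Matrix.mul_assoc]
  rw [← Matrix.mul_assoc V, hV, Matrix.one_mul, ← Matrix.mul_assoc P, hP, Matrix.one_mul]
  simp only [det_mul, det_transpose]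
  linear_combination D.det ^ 2 * det_mul_self_eq_one_of_mul_transpose_eq_one hU

end SVD

theorem abs_det_eq_one_of_mul_transpose_eq_one {m R : Type*} [Fintype m] [DecidableEq m]
    [CommRing R] [LinearOrder R] [IsStrictOrderedRing R] {U : Matrix m m R}
    (hU : U * Uᵀ = 1) : |U.det| = 1 := by
  rcases mul_self_eq_one_iff.mp (det_mul_self_eq_one_of_mul_transpose_eq_one hU) with h | h <;>
    simp [h]

theorem mul_mulVec_mem_image_iff {R m n : Type*} [CommRing R] [Fintype m] [Fintype n]
    [DecidableEq m] {S : Matrix m n R} {T : Matrix n m R} (hST : S * T = 1) {K : Set (m → R)}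
    {x : n → R} :
    (T * S) *ᵥ x ∈ (T *ᵥ ·) '' K ↔ S *ᵥ x ∈ K := by
  refine ⟨fun ⟨y, hy, hyx⟩ => ?_, fun h => ⟨S *ᵥ x, h, mulVec_mulVec _ _ _⟩⟩
  have hSy := congrArg (S *ᵥ ·) hyx
  simp only [mulVec_mulVec, ← Matrix.mul_assoc, hST, Matrix.one_mul, one_mulVec] at hSy
  rwa [← hSy]

theorem measure_mulVec_mem_le {ι Ω : Type*} [Fintype ι] [DecidableEq ι] [MeasurableSpace Ω]
    {μ : Measure Ω} {Y : Ω → ι → ℝ} {g : (ι → ℝ) → ℝ} {C : ℝ}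
    (hg : ∀ A : Set (ι → ℝ), MeasurableSet A →
      μ {ω | Y ω ∈ A} = ∫⁻ x in A, ENNReal.ofReal (g x))
    (hgC : ∀ᵐ x : ι → ℝ, g x ≤ C) {A : Matrix ι ι ℝ} (hA : A.det ≠ 0)
    {K : Set (ι → ℝ)} (hK : MeasurableSet K) :
    μ {ω | A *ᵥ Y ω ∈ K} ≤ ENNReal.ofReal (C / |A.det|) * volume K := by
  have hpre : MeasurableSet (toLin' A ⁻¹' K) :=
    hK.preimage (toLin' A).continuous_of_finiteDimensional.measurable
  calc μ {ω | A *ᵥ Y ω ∈ K} = ∫⁻ x in toLin' A ⁻¹' K, ENNReal.ofReal (g x) := hg _ hpre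
    _ ≤ ∫⁻ _ in toLin' A ⁻¹' K, ENNReal.ofReal C :=
        lintegral_mono_ae <| by
          filter_upwards [ae_restrict_of_ae hgC] with x hx using ENNReal.ofReal_le_ofReal hx
    _ = ENNReal.ofReal C * volume (toLin' A ⁻¹' K) := setLIntegral_const _ _
    _ = ENNReal.ofReal (C / |A.det|) * volume K := by
        rw [Measure.addHaar_preimage_linearMap _ (by rwa [LinearMap.det_toLin']),
          LinearMap.det_toLin', abs_inv, div_eq_mul_inv, ENNReal.ofReal_mul' (by positivity),
          mul_assoc]

/-- let `X` be a random vector in `ℝ^n` with a density and let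
`S = U D P_k V : ℝ^n → ℝ^k` (singular value decomposition, `rank S = k`). With
`E = V*(ℝ^k)`, for every compact `K ⊂ ℝ^k`:
`P(SX ∈ K) = P(P_E X ∈ V* D⁻¹ U* K)`, and consequently
`P(SX ∈ K) ≤ vol(K)·‖f_{P_E X}‖_∞ / det(SS*)^{1/2}` (here the density `g` of `P_E X` is
written in coordinates of `E`, i.e. as the density of `P_k V X`). -/
theorem svd_pushforward_small_ball (n k : ℕ) (hkn : k ≤ n)
    (Ω : Type) (_ : MeasurableSpace Ω) (μ : Measure Ω)
    (X : Ω → Fin n → ℝ)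
    (S : Matrix (Fin k) (Fin n) ℝ)
    (U : Matrix (Fin k) (Fin k) ℝ) (V : Matrix (Fin n) (Fin n) ℝ)
    (D : Matrix (Fin k) (Fin k) ℝ)
    (hU : U * U.transpose = 1) (hV : V * V.transpose = 1)
    (hDdiag : ∀ i j, i ≠ j → D i j = 0) (hDpos : ∀ i, 0 < D i i)
    (hS : S = U * D * coordProj k n * V)
    (K : Set (Fin k → ℝ)) (hK : IsCompact K) :
    μ {ω | S.mulVec (X ω) ∈ K} =
      μ {ω | (V.transpose * (coordProj k n).transpose * coordProj k n * V).mulVec (X ω) ∈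
          (fun y => (V.transpose * (coordProj k n).transpose * D⁻¹ * U.transpose).mulVec y) '' K}
    ∧ ∀ (g : (Fin k → ℝ) → ℝ) (C : ℝ),
        (∀ A : Set (Fin k → ℝ), MeasurableSet A →
          μ {ω | (coordProj k n * V).mulVec (X ω) ∈ A} = ∫⁻ x in A, ENNReal.ofReal (g x)) →
        (∀ᵐ x : Fin k → ℝ, g x ≤ C) →
        μ {ω | S.mulVec (X ω) ∈ K} ≤
          ENNReal.ofReal (C / Real.sqrt (S * S.transpose).det) * volume K := by
  have hP := coordProj_mul_transpose hkn
  have hDdet : 0 < D.det := IsDiag.det_pos hDdiag hDpos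
  have hUD : |(U * D).det| = D.det := by
    rw [det_mul, abs_mul, abs_det_eq_one_of_mul_transpose_eq_one hU, one_mul, abs_of_pos hDdet]
  refine ⟨?_, fun g C hg hgC => ?_⟩
  · congr 1
    ext ω
    rw [Set.mem_ofPred_eq, Set.mem_ofPred_eq, ← pseudoinverse_mul_svd hU hDdet.ne'.isUnit, ← hS]
    exact (mul_mulVec_mem_image_iff (hS ▸ svd_mul_pseudoinverse hU hV hP hDdet.ne'.isUnit)).symm
  · have hSX : {ω | S *ᵥ X ω ∈ K} = {ω | (U * D) *ᵥ ((coordProj k n * V) *ᵥ X ω) ∈ K} := by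
      simp only [hS, mulVec_mulVec, Matrix.mul_assoc]
    rw [hSX, hS, det_svd_mul_transpose hU hV hP, Real.sqrt_sq hDdet.le, ← hUD]
    exact measure_mulVec_mem_le hg hgC (abs_pos.mp (hUD ▸ hDdet)) hK.measurableSet
end

section
/- Let X be a random vector in R^n such that for every k-dimensional subspace E ⊂ R^n the density of P_E X satisfies ‖f_{P_E X}‖_∞ ≤ L^k. Then for every linear map T : R^n → R^m and every k-dimensional subspace F ⊂ R^m with P_F T of rank k, the density of P_F T X satisfies ‖f_{P_F T X}‖_∞ ≤ L^k / det[(P_F T)(P_F T)*]^{1/2}. -/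
open MeasureTheory Matrix

/-! Factor `B = M A` with `M = (B Bᵀ)^{1/2}` (polar decomposition), so that `A` has orthonormal
rows and `det M = det(B Bᵀ)^{1/2}`. Since `B X = M (A X)`, the change of variables formula shows
that `A X` has density `x ↦ det M · h (M x)`; the hypothesis bounds it by `L^k` almost
everywhere, and because `M` is invertible this transfers to `h ≤ L^k / det M` almost
everywhere. -/

namespace Matrix

variable {m n : Type*} [Fintype m] [DecidableEq m]

theorem isUnit_of_rank_eq_card {K : Type*} [Field K] {A : Matrix m m K}
    (hA : A.rank = Fintype.card m) : IsUnit A :=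
  mulVec_surjective_iff_isUnit.mp <| LinearMap.range_eq_top.mp <|
    Submodule.eq_top_of_finrank_eq (S := LinearMap.range A.mulVecLin)
      (by rw [← Matrix.rank, hA, Module.finrank_fintype_fun_eq_card])

theorem posDef_mul_transpose_of_rank_eq_card [Fintype n] {B : Matrix m n ℝ}
    (hB : B.rank = Fintype.card m) : (B * Bᵀ).PosDef := by
  have hG : (B * Bᵀ).PosSemidef := by
    simpa only [conjTranspose_eq_transpose_of_trivial] using posSemidef_self_mul_conjTranspose B
  exact hG.posDef_iff_isUnit.mpr <| isUnit_of_rank_eq_card <| by rw [rank_self_mul_transpose, hB]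

open scoped MatrixOrder in
theorem exists_polar_decomposition [Fintype n] {B : Matrix m n ℝ}
    (hB : (B * Bᵀ).PosDef) : ∃ (M : Matrix m m ℝ) (A : Matrix m n ℝ),
      M.det = √(B * Bᵀ).det ∧ A * Aᵀ = 1 ∧ B = M * A := by
  set M := CFC.sqrt (B * Bᵀ)
  have hMM : M * M = B * Bᵀ := CFC.sqrt_mul_sqrt_self _ hB.posSemidef.nonneg
  have hMdet : M.det = √(B * Bᵀ).det := by
    simpa only [RCLike.sqrt_real] using hB.posSemidef.det_sqrt
  have hMsymm : Mᵀ = M := by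
    simpa only [conjTranspose_eq_transpose_of_trivial] using
      (nonneg_iff_posSemidef.mp (CFC.sqrt_nonneg (B * Bᵀ))).isHermitian.eq
  have hMunit : IsUnit M.det := by
    rw [hMdet]
    exact (Real.sqrt_pos.mpr hB.det_pos).ne'.isUnit
  refine ⟨M, M⁻¹ * B, hMdet, ?_, ?_⟩
  · calc M⁻¹ * B * (M⁻¹ * B)ᵀ = M⁻¹ * (M * M) * M⁻¹ := by
          rw [transpose_mul, transpose_nonsing_inv, hMsymm, hMM]; simp only [Matrix.mul_assoc]
      _ = 1 := by
          rw [← Matrix.mul_assoc, nonsing_inv_mul M hMunit, Matrix.one_mul,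
            mul_nonsing_inv M hMunit]
  · rw [← Matrix.mul_assoc, mul_nonsing_inv M hMunit, Matrix.one_mul]

end Matrix

section Density

variable {Ω E : Type*} [MeasurableSpace Ω]

def HasDensity [MeasureSpace E] (μ : Measure Ω) (Y : Ω → E) (h : E → ℝ) : Prop :=
  ∀ s : Set E, MeasurableSet s → μ {ω | Y ω ∈ s} = ∫⁻ x in s, ENNReal.ofReal (h x)

variable [NormedAddCommGroup E] [NormedSpace ℝ E] [FiniteDimensional ℝ E] [MeasureSpace E]
  [BorelSpace E] [(volume : Measure E).IsAddHaarMeasure]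

theorem HasDensity.of_comp_continuousLinearMap {μ : Measure Ω} {Z : Ω → E} {h : E → ℝ}
    {f : E →L[ℝ] E} (hf : f.det ≠ 0) (hZ : HasDensity μ (fun ω => f (Z ω)) h) :
    HasDensity μ Z (fun x => |f.det| * h (f x)) := by
  intro s hs
  have hinj : Function.Injective f := (f.toContinuousLinearEquivOfDetNeZero hf).injective
  have hpre : {ω | Z ω ∈ s} = {ω | f (Z ω) ∈ f '' s} := by
    ext ω; exact hinj.mem_set_image.symm
  rw [hpre, hZ _ (hs.image_of_continuousOn_injOn f.continuous.continuousOn hinj.injOn),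
    lintegral_image_eq_lintegral_abs_det_fderiv_mul volume hs
      (fun x _ => f.hasFDerivAt.hasFDerivWithinAt) hinj.injOn]
  refine setLIntegral_congr_fun hs fun x _ => ?_
  rw [ENNReal.ofReal_mul (abs_nonneg _)]

theorem ae_of_ae_comp_continuousLinearMap {p : E → Prop} {f : E →L[ℝ] E} (hf : f.det ≠ 0)
    (hp : ∀ᵐ x, p (f x)) : ∀ᵐ y, p y := by
  let e := f.toContinuousLinearEquivOfDetNeZero hf
  have he : (e.symm : E →L[ℝ] E).det ≠ 0 :=
    (LinearEquiv.isUnit_det' e.symm.toLinearEquiv).ne_zero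
  filter_upwards [(Measure.ContinuousLinearMap.quasiMeasurePreserving volume _ he).ae hp] with y hy
  exact e.apply_symm_apply y ▸ hy

end Density

theorem density_bound_under_linear_image (n k : ℕ)
    (Ω : Type) (_ : MeasurableSpace Ω) (μ : Measure Ω)
    (X : Ω → Fin n → ℝ) (L : ℝ)
    (hyp : ∀ A : Matrix (Fin k) (Fin n) ℝ, A * A.transpose = 1 →
      ∀ g : (Fin k → ℝ) → ℝ,
        (∀ s : Set (Fin k → ℝ), MeasurableSet s →
          μ {ω | A.mulVec (X ω) ∈ s} = ∫⁻ x in s, ENNReal.ofReal (g x)) →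
        ∀ᵐ x : Fin k → ℝ, g x ≤ L ^ k)
    (B : Matrix (Fin k) (Fin n) ℝ) (hB : B.rank = k) :
    ∀ h : (Fin k → ℝ) → ℝ,
      (∀ s : Set (Fin k → ℝ), MeasurableSet s →
        μ {ω | B.mulVec (X ω) ∈ s} = ∫⁻ x in s, ENNReal.ofReal (h x)) →
      ∀ᵐ x : Fin k → ℝ, h x ≤ L ^ k / Real.sqrt (B * B.transpose).det := by
  intro h hBX
  have hG : (B * Bᵀ).PosDef := posDef_mul_transpose_of_rank_eq_card (by rw [hB, Fintype.card_fin])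
  obtain ⟨M, A, hMdet, hAAT, hBMA⟩ := exists_polar_decomposition hG
  have hMpos : 0 < M.det := hMdet ▸ Real.sqrt_pos.mpr hG.det_pos
  set f : (Fin k → ℝ) →L[ℝ] (Fin k → ℝ) := LinearMap.toContinuousLinearMap (toLin' M)
  have hfdet : f.det = M.det := LinearMap.det_toLin' M
  have hAX : HasDensity μ (fun ω => A *ᵥ X ω) (fun x => |f.det| * h (f x)) := by
    refine HasDensity.of_comp_continuousLinearMap (hfdet ▸ hMpos.ne') ?_
    simp only [f, LinearMap.coe_toContinuousLinearMap', toLin'_apply, mulVec_mulVec, ← hBMA]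
    exact hBX
  filter_upwards [ae_of_ae_comp_continuousLinearMap (p := fun y => |f.det| * h y ≤ L ^ k)
    (hfdet ▸ hMpos.ne') (hyp A hAAT _ hAX)] with y hy
  rw [← hMdet, le_div_iff₀' hMpos]
  rwa [hfdet, abs_of_pos hMpos] at hy
end

section
/- Let X be a random vector in R^n whose coordinates x_1,...,x_n satisfy: for every subset τ ⊂ {1,...,n} and every ε ∈ (0,1), P(|{i ∈ τ : |x_i| ≥ ε}| ≤ |τ|/2) ≤ (c_3 L ε)^{c_4 |τ|} for absolute constants c_3, c_4 and a constant L ≥ 1. Then there exist absolute constants c_1, c_2 such that for every a ∈ R^n and every ε ∈ (0,1), with k = (c_1·‖a‖_p/‖a‖_∞)^p, one has P(‖(a_i x_i)_{i=1}^n‖_p ≤ ε·‖a‖_p) ≤ (c_2·ε·L)^k. -/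
/-!
Write `w i = |a i| ^ p` and sort the support of `w` into dyadic levels
`I_j = {i : W / 2 ^ (j + 1) < w i ≤ W / 2 ^ j}`, where `W = ‖a‖_∞ ^ p`. Levels with fewer than
`K ≍ k` elements carry at most half of `‖a‖_p ^ p`, since their masses are dominated by
`K W ∑ 2⁻ʲ`. Among the remaining levels keep, for each cardinality, only the one of least index:
the other levels of that cardinality sum geometrically to at most twice its mass. If
`‖(a_i x_i)‖_p ≤ ε ‖a‖_p`, then some kept block has at most half of its coordinates with
`|x_i| ≥ 32 ε`, which has probability at most `(32 c₃ L ε) ^ (c₄ |I_j|)`. The kept blocks have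
distinct cardinalities `≥ K`, so the union bound is a geometric series dominated by
`(32 c₃ L ε) ^ k`.
-/

open MeasureTheory Finset

lemma sum_pow_le_two_mul_pow {r : ℝ} (h0 : 0 ≤ r) (h1 : r ≤ 1 / 2) {F : Finset ℕ} {m : ℕ}
    (hF : ∀ j ∈ F, m ≤ j) : ∑ j ∈ F, r ^ j ≤ 2 * r ^ m := by
  have hsub : F ⊆ Ico m (F.sup id + 1) := fun j hj =>
    mem_Ico.2 ⟨hF j hj, Nat.lt_succ_of_le (le_sup (f := id) hj)⟩
  calc ∑ j ∈ F, r ^ j ≤ ∑ j ∈ Ico m (F.sup id + 1), r ^ j :=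
        sum_le_sum_of_subset_of_nonneg hsub fun j _ _ => pow_nonneg h0 j
    _ ≤ r ^ m / (1 - r) := geom_sum_Ico_le_of_lt_one h0 (by linarith)
    _ ≤ 2 * r ^ m := by
        rw [div_le_iff₀ (by linarith)]
        nlinarith [pow_nonneg h0 m]

/-- Take for `R` the least element of each fibre of `f`; the rest of a fibre adds at most as much
again. -/
lemma exists_subset_injOn_sum_le (H : Finset ℕ) (f : ℕ → ℕ) :
    ∃ R ⊆ H, Set.InjOn f R ∧
      ∑ j ∈ H, (f j : ℝ) * 2⁻¹ ^ j ≤ 2 * ∑ j ∈ R, (f j : ℝ) * 2⁻¹ ^ j := by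
  classical
  set fibre : ℕ → Finset ℕ := fun m => H.filter (f · = f m)
  set R := H.filter fun m => ∀ j ∈ fibre m, m ≤ j
  have hR_le {m} (hm : m ∈ R) : ∀ j ∈ fibre m, m ≤ j := (mem_filter.1 hm).2
  have hinj : Set.InjOn f R := fun m hm m' hm' h =>
    le_antisymm (hR_le hm m' (mem_filter.2 ⟨(mem_filter.1 hm').1, h.symm⟩))
      (hR_le hm' m (mem_filter.2 ⟨(mem_filter.1 hm).1, h⟩))
  have hcover : H = R.biUnion fibre := by
    ext j
    refine ⟨fun hj => ?_, fun hj => ?_⟩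
    · obtain ⟨m, hm, hmin⟩ := (fibre j).exists_min_image id ⟨j, mem_filter.2 ⟨hj, rfl⟩⟩
      obtain ⟨hmH, hmj⟩ := mem_filter.1 hm
      refine mem_biUnion.2 ⟨m, mem_filter.2 ⟨hmH, fun j' hj' => hmin j' ?_⟩, ?_⟩
      · obtain ⟨hj'H, hj'm⟩ := mem_filter.1 hj'
        exact mem_filter.2 ⟨hj'H, hj'm.trans hmj⟩
      · exact mem_filter.2 ⟨hj, hmj.symm⟩
    · obtain ⟨m, -, hjm⟩ := mem_biUnion.1 hj
      exact (mem_filter.1 hjm).1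
  have hdisj : (R : Set ℕ).PairwiseDisjoint fibre := fun m hm m' hm' hne =>
    disjoint_left.2 fun j hj hj' =>
      hne (hinj hm hm' ((mem_filter.1 hj).2.symm.trans (mem_filter.1 hj').2))
  refine ⟨R, filter_subset _ _, hinj, ?_⟩
  calc ∑ j ∈ H, (f j : ℝ) * 2⁻¹ ^ j = ∑ m ∈ R, (f m : ℝ) * ∑ j ∈ fibre m, (2⁻¹ : ℝ) ^ j := by
        conv_lhs => rw [hcover]
        rw [sum_biUnion hdisj]
        refine sum_congr rfl fun m _ => ?_
        rw [mul_sum]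
        exact sum_congr rfl fun j hj => by rw [(mem_filter.1 hj).2]
    _ ≤ ∑ m ∈ R, (f m : ℝ) * (2 * 2⁻¹ ^ m) :=
        sum_le_sum fun m hm => mul_le_mul_of_nonneg_left
          (sum_pow_le_two_mul_pow (by norm_num) (by norm_num) (hR_le hm)) (Nat.cast_nonneg _)
    _ = 2 * ∑ j ∈ R, (f j : ℝ) * 2⁻¹ ^ j := by
        rw [mul_sum]
        exact sum_congr rfl fun m _ => by ring

lemma exists_dyadic_level {x W : ℝ} (hx : 0 < x) (hxW : x ≤ W) :
    ∃ j : ℕ, W * 2⁻¹ ^ (j + 1) < x ∧ x ≤ W * 2⁻¹ ^ j := by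
  have hW : 0 < W := hx.trans_le hxW
  have hex : ∃ j : ℕ, W * 2⁻¹ ^ (j + 1) < x := by
    obtain ⟨j, hj⟩ := exists_pow_lt_of_lt_one (div_pos hx hW) (by norm_num : (2⁻¹ : ℝ) < 1)
    refine ⟨j, lt_of_le_of_lt ?_ ((lt_div_iff₀' hW).1 hj)⟩
    exact mul_le_mul_of_nonneg_left (pow_le_pow_of_le_one (by norm_num) (by norm_num)
      (Nat.le_succ j)) hW.le
  refine ⟨Nat.find hex, Nat.find_spec hex, ?_⟩
  rcases h : Nat.find hex with _ | j
  · simpa using hxW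
  · exact not_lt.1 (Nat.find_min hex (h ▸ Nat.lt_succ_self j))

section LevelBlocks

variable {ι : Type*} [Fintype ι] {w : ι → ℝ} {lev : ι → ℕ} {W : ℝ}

/-- The `j`-th dyadic block `I_j` of the support of `w`, for a level function `lev` with
`W / 2 ^ (lev i + 1) < w i ≤ W / 2 ^ lev i`. -/
noncomputable def levelBlock (w : ι → ℝ) (lev : ι → ℕ) (j : ℕ) : Finset ι :=
  {i | 0 < w i ∧ lev i = j}

lemma sum_levelBlock_le (hlev : ∀ i, 0 < w i → w i ≤ W * 2⁻¹ ^ lev i) (j : ℕ) :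
    ∑ i ∈ levelBlock w lev j, w i ≤ #(levelBlock w lev j) * (W * 2⁻¹ ^ j) := by
  rw [← nsmul_eq_mul]
  refine sum_le_card_nsmul _ _ _ fun i hi => ?_
  obtain ⟨hpos, rfl⟩ := (mem_filter.1 hi).2
  exact hlev i hpos

lemma card_filter_mul_le_sum_levelBlock (hlev : ∀ i, 0 < w i → W * 2⁻¹ ^ (lev i + 1) < w i)
    (j : ℕ) (P : ι → Prop) [DecidablePred P] :
    #((levelBlock w lev j).filter P) * (W * 2⁻¹ ^ (j + 1)) ≤
      ∑ i ∈ (levelBlock w lev j).filter P, w i := by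
  rw [← nsmul_eq_mul]
  refine card_nsmul_le_sum _ _ _ fun i hi => ?_
  obtain ⟨hpos, rfl⟩ := (mem_filter.1 (mem_filter.1 hi).1).2
  exact (hlev i hpos).le

lemma exists_heavy_levels (hw : ∀ i, 0 ≤ w i) (hW : 0 ≤ W)
    (hlev : ∀ i, 0 < w i → w i ≤ W * 2⁻¹ ^ lev i) {K : ℝ} (hK : 0 ≤ K)
    (hKW : 4 * K * W ≤ ∑ i, w i) :
    ∃ H : Finset ℕ, (∀ j ∈ H, K ≤ #(levelBlock w lev j)) ∧
      (∑ i, w i) / 2 ≤ W * ∑ j ∈ H, (#(levelBlock w lev j) : ℝ) * 2⁻¹ ^ j := by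
  classical
  set T := ({i | 0 < w i} : Finset ι).image lev
  have hsum : ∑ i, w i = ∑ j ∈ T, ∑ i ∈ levelBlock w lev j, w i := by
    rw [← sum_filter_of_ne fun i _ hi => (hw i).lt_of_ne' hi,
      ← sum_fiberwise_of_maps_to fun i hi => mem_image_of_mem lev hi]
    simp only [levelBlock, filter_filter]
    rfl
  have hlight : ∑ j ∈ T with ¬K ≤ #(levelBlock w lev j), ∑ i ∈ levelBlock w lev j, w i ≤
      2 * K * W :=
    calc _ ≤ ∑ j ∈ T with ¬K ≤ #(levelBlock w lev j), K * (W * 2⁻¹ ^ j) :=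
          sum_le_sum fun j hj => (sum_levelBlock_le hlev j).trans <|
            mul_le_mul_of_nonneg_right (not_le.1 (mem_filter.1 hj).2).le (by positivity)
      _ = K * W * ∑ j ∈ T with ¬K ≤ #(levelBlock w lev j), (2⁻¹ : ℝ) ^ j := by
          rw [mul_sum]
          exact sum_congr rfl fun j _ => by ring
      _ ≤ K * W * 2 := by
          refine mul_le_mul_of_nonneg_left ?_ (by positivity)
          simpa using sum_pow_le_two_mul_pow (r := 2⁻¹) (by norm_num) (by norm_num)
            fun j _ => Nat.zero_le j
      _ = 2 * K * W := by ring
  refine ⟨T.filter fun j => K ≤ #(levelBlock w lev j), fun j hj => (mem_filter.1 hj).2, ?_⟩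
  have hheavy : ∑ j ∈ T with K ≤ #(levelBlock w lev j), ∑ i ∈ levelBlock w lev j, w i ≤
      W * ∑ j ∈ T with K ≤ #(levelBlock w lev j), (#(levelBlock w lev j) : ℝ) * 2⁻¹ ^ j := by
    rw [mul_sum]
    exact sum_le_sum fun j _ => (sum_levelBlock_le hlev j).trans_eq (by ring)
  linarith [sum_filter_add_sum_filter_not T (fun j => K ≤ #(levelBlock w lev j))
    fun j => ∑ i ∈ levelBlock w lev j, w i]

end LevelBlocks

theorem exists_majority_blocks {ι : Type*} [Fintype ι] {w : ι → ℝ} (hw : ∀ i, 0 ≤ w i)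
    {W K : ℝ} (hW : 0 ≤ W) (hwW : ∀ i, w i ≤ W) (hK : 0 ≤ K) (hKW : 4 * K * W ≤ ∑ i, w i) :
    ∃ (R : Finset ℕ) (τ : ℕ → Finset ι), Set.InjOn (fun j => #(τ j)) R ∧
      (∀ j ∈ R, K ≤ #(τ j)) ∧
      ∀ (P : ι → Prop) [DecidablePred P], (∀ j ∈ R, (#(τ j) : ℝ) / 2 < #((τ j).filter P)) →
        (∑ i, w i) / 16 ≤ ∑ i with P i, w i := by
  classical
  choose! lev hlev using fun i (hi : 0 < w i) => exists_dyadic_level hi (hwW i)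
  obtain ⟨H, hHK, hH⟩ := exists_heavy_levels hw hW (fun i hi => (hlev i hi).2) hK hKW
  obtain ⟨R, hRH, hinj, hR⟩ := exists_subset_injOn_sum_le H fun j => #(levelBlock w lev j)
  refine ⟨R, levelBlock w lev, hinj, fun j hj => hHK j (hRH hj), fun P _ hP => ?_⟩
  have hblock (j) (hj : j ∈ R) : W * ((#(levelBlock w lev j) : ℝ) * 2⁻¹ ^ j) ≤
      4 * ∑ i ∈ (levelBlock w lev j).filter P, w i := by
    have hlow := card_filter_mul_le_sum_levelBlock (fun i hi => (hlev i hi).1) j P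
    have hmaj := hP j hj
    rw [pow_succ] at hlow
    nlinarith [mul_nonneg hW (pow_nonneg (by norm_num : (0 : ℝ) ≤ 2⁻¹) j)]
  have hdisj : (R : Set ℕ).PairwiseDisjoint fun j => (levelBlock w lev j).filter P :=
    fun j _ j' _ hne => disjoint_left.2 fun i hi hi' =>
      hne <| ((mem_filter.1 (mem_filter.1 hi).1).2.2).symm.trans
        (mem_filter.1 (mem_filter.1 hi').1).2.2
  have hsub : R.biUnion (fun j => (levelBlock w lev j).filter P) ⊆ univ.filter P :=
    fun i hi => by
      obtain ⟨j, -, hij⟩ := mem_biUnion.1 hi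
      exact mem_filter.2 ⟨mem_univ i, (mem_filter.1 hij).2⟩
  calc (∑ i, w i) / 16 ≤ W * ∑ j ∈ R, (#(levelBlock w lev j) : ℝ) * 2⁻¹ ^ j / 4 := by
        rw [← sum_div, mul_div_assoc']
        linarith [mul_le_mul_of_nonneg_left hR hW, mul_left_comm W 2
          (∑ j ∈ R, (#(levelBlock w lev j) : ℝ) * 2⁻¹ ^ j)]
    _ ≤ ∑ j ∈ R, ∑ i ∈ (levelBlock w lev j).filter P, w i := by
        rw [mul_sum]
        exact sum_le_sum fun j hj => by linarith [hblock j hj]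
    _ = ∑ i ∈ R.biUnion (fun j => (levelBlock w lev j).filter P), w i := (sum_biUnion hdisj).symm
    _ ≤ ∑ i with P i, w i := sum_le_sum_of_subset_of_nonneg hsub fun i _ _ => hw i

lemma sum_rpow_mul_natCast_le_rpow {y c k : ℝ} (hy : 0 < y) (hc : 0 < c) (hyc : y ^ (c / 2) ≤ 1 / 2)
    (hk : 0 < k) {𝒩 : Finset ℕ} (h𝒩 : ∀ N ∈ 𝒩, k ≤ c * N / 2) :
    ∑ N ∈ 𝒩, y ^ (c * N) ≤ y ^ k := by
  have hy1 : y ≤ 1 := by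
    by_contra h
    linarith [Real.one_le_rpow (not_le.1 h).le (by positivity : 0 ≤ c / 2)]
  have hz : 0 ≤ y ^ (c / 2) := by positivity
  have hN (N) (hN : N ∈ 𝒩) : 1 ≤ N := by
    have := h𝒩 N hN
    rcases N with _ | N
    · simp only [CharP.cast_eq_zero, mul_zero, zero_div] at this; linarith
    · exact N.succ_pos
  calc ∑ N ∈ 𝒩, y ^ (c * N) ≤ ∑ N ∈ 𝒩, y ^ k * (y ^ (c / 2)) ^ N := sum_le_sum fun N hN' => by
        rw [show c * N = c * N / 2 + c / 2 * N by ring, Real.rpow_add hy, Real.rpow_mul hy.le,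
          Real.rpow_natCast]
        exact mul_le_mul_of_nonneg_right (Real.rpow_le_rpow_of_exponent_ge hy hy1 (h𝒩 N hN'))
          (pow_nonneg hz N)
    _ = y ^ k * ∑ N ∈ 𝒩, (y ^ (c / 2)) ^ N := (mul_sum ..).symm
    _ ≤ y ^ k * (2 * (y ^ (c / 2)) ^ 1) :=
        mul_le_mul_of_nonneg_left (sum_pow_le_two_mul_pow hz hyc hN) (by positivity)
    _ ≤ y ^ k := by
        rw [pow_one]
        nlinarith [Real.rpow_nonneg hy.le k]

def CoordinateSmallBall {Ω ι : Type*} [MeasurableSpace Ω] (μ : Measure Ω) (X : Ω → ι → ℝ)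
    (c₃ c₄ L : ℝ) : Prop :=
  ∀ (τ : Finset ι) (ε : ℝ), 0 < ε → ε < 1 →
    μ {ω | (Set.ncard {i : ι | i ∈ τ ∧ ε ≤ |X ω i|} : ℝ) ≤ (τ.card : ℝ) / 2} ≤
      ENNReal.ofReal ((c₃ * L * ε) ^ (c₄ * (τ.card : ℝ)))

theorem CoordinateSmallBall.measure_sum_lt_le {Ω ι : Type*} [MeasurableSpace Ω] [Fintype ι]
    {μ : Measure Ω} {X : Ω → ι → ℝ} {c₃ c₄ L : ℝ} (hX : CoordinateSmallBall μ X c₃ c₄ L)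
    (hc₄ : 0 < c₄) {w : ι → ℝ} (hw : ∀ i, 0 ≤ w i) {W : ℝ} (hW : 0 ≤ W) (hwW : ∀ i, w i ≤ W)
    {k : ℝ} (hk : 0 < k) (hkW : 8 * k * W ≤ c₄ * ∑ i, w i) {t p : ℝ} (ht : 0 < t) (ht1 : t < 1)
    (hp : 0 ≤ p) (hy : 0 < c₃ * L * t) (hyc : (c₃ * L * t) ^ (c₄ / 2) ≤ 1 / 2) :
    μ {ω | ∑ i, w i * |X ω i| ^ p < t ^ p * (∑ i, w i) / 16} ≤
      ENNReal.ofReal ((c₃ * L * t) ^ k) := by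
  classical
  have hKW : 4 * (2 * k / c₄) * W ≤ ∑ i, w i := by
    rw [show 4 * (2 * k / c₄) * W = 8 * k * W / c₄ by ring, div_le_iff₀ hc₄]
    linarith [mul_comm c₄ (∑ i, w i)]
  obtain ⟨R, τ, hinj, hK, hmass⟩ :=
    exists_majority_blocks hw hW hwW (by positivity) hKW
  have hsub : {ω | ∑ i, w i * |X ω i| ^ p < t ^ p * (∑ i, w i) / 16} ⊆
      ⋃ j ∈ R, {ω | (Set.ncard {i | i ∈ τ j ∧ t ≤ |X ω i|} : ℝ) ≤ #(τ j) / 2} := by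
    intro ω (hω : ∑ i, w i * |X ω i| ^ p < t ^ p * (∑ i, w i) / 16)
    by_contra hnot
    simp only [Set.mem_iUnion, Set.mem_ofPred_eq, not_exists, not_le] at hnot
    have hmaj := hmass (fun i => t ≤ |X ω i|) fun j hj => by
      simpa only [← coe_filter, Set.ncard_coe_finset] using hnot j hj
    refine hω.not_ge ?_
    calc t ^ p * (∑ i, w i) / 16 ≤ ∑ i with t ≤ |X ω i|, t ^ p * w i := by
          rw [← mul_sum]; nlinarith [Real.rpow_nonneg ht.le p]
      _ ≤ ∑ i with t ≤ |X ω i|, w i * |X ω i| ^ p := sum_le_sum fun i hi => by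
          rw [mul_comm]
          exact mul_le_mul_of_nonneg_left (Real.rpow_le_rpow ht.le (mem_filter.1 hi).2 hp) (hw i)
      _ ≤ ∑ i, w i * |X ω i| ^ p :=
          sum_le_sum_of_subset_of_nonneg (filter_subset _ _) fun i _ _ =>
            mul_nonneg (hw i) (by positivity)
  calc μ _ ≤ μ (⋃ j ∈ R, {ω | (Set.ncard {i | i ∈ τ j ∧ t ≤ |X ω i|} : ℝ) ≤ #(τ j) / 2}) :=
        measure_mono hsub
    _ ≤ ∑ j ∈ R, ENNReal.ofReal ((c₃ * L * t) ^ (c₄ * #(τ j))) :=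
        (measure_biUnion_finset_le _ _).trans (sum_le_sum fun j _ => hX (τ j) t ht ht1)
    _ = ENNReal.ofReal (∑ N ∈ R.image (fun j => #(τ j)), (c₃ * L * t) ^ (c₄ * N)) := by
        rw [sum_image hinj, ENNReal.ofReal_sum_of_nonneg fun j _ => by positivity]
    _ ≤ ENNReal.ofReal ((c₃ * L * t) ^ k) := by
        refine ENNReal.ofReal_le_ofReal (sum_rpow_mul_natCast_le_rpow hy hc₄ hyc hk ?_)
        simp only [mem_image, forall_exists_index, and_imp]
        rintro _ j hj rfl
        have := hK j hj
        rw [div_le_iff₀ hc₄] at this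
        linarith

lemma le_rpow_mul_of_rpow_one_div_le {A S ε p : ℝ} (hA : 0 ≤ A) (hS : 0 ≤ S) (hε : 0 ≤ ε)
    (hp : 0 < p) (h : A ^ (1 / p) ≤ ε * S ^ (1 / p)) : A ≤ ε ^ p * S := by
  rw [one_div, Real.rpow_inv_le_iff_of_pos hA (by positivity) hp,
    Real.mul_rpow hε (by positivity), Real.rpow_inv_rpow hS hp.ne'] at h
  exact h

lemma rpow_le_half_of_mul_two_rpow_le_one {y c : ℝ} (hy : 0 ≤ y) (hc : 0 < c)
    (h : y * 2 ^ (2 / c) ≤ 1) : y ^ (c / 2) ≤ 1 / 2 := by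
  have hy' : y ≤ ((2 : ℝ) ^ (2 / c))⁻¹ := by
    rw [← one_div]
    exact (le_div_iff₀ (by positivity)).2 h
  calc y ^ (c / 2) ≤ (((2 : ℝ) ^ (2 / c))⁻¹) ^ (c / 2) := Real.rpow_le_rpow hy hy' (by positivity)
    _ = 1 / 2 := by
        rw [Real.inv_rpow (by positivity), ← Real.rpow_mul (by norm_num),
          show 2 / c * (c / 2) = 1 by field_simp, Real.rpow_one, one_div]

theorem CoordinateSmallBall.measure_lpNorm_le {Ω ι : Type*} [MeasurableSpace Ω] [Fintype ι]
    {μ : Measure Ω} {X : Ω → ι → ℝ} {c₃ c₄ L : ℝ} (hX : CoordinateSmallBall μ X c₃ c₄ L)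
    (hc₄ : 0 < c₄) {c : ℝ} (hc : 0 < c) (hc1 : c ≤ 1) (hcc₄ : 8 * c ≤ c₄) {p : ℝ} (hp : 1 ≤ p)
    {a : ι → ℝ} (ha : a ≠ 0) {ε : ℝ} (hε : 0 < ε) (hε1 : 32 * ε < 1)
    (hy : 0 < c₃ * L * (32 * ε)) (hyc : (c₃ * L * (32 * ε)) ^ (c₄ / 2) ≤ 1 / 2) :
    μ {ω | (∑ i, |a i * X ω i| ^ p) ^ ((1 : ℝ) / p) ≤ ε * (∑ i, |a i| ^ p) ^ ((1 : ℝ) / p)} ≤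
      ENNReal.ofReal ((c₃ * L * (32 * ε)) ^
        ((c * (∑ i, |a i| ^ p) ^ ((1 : ℝ) / p) / ⨆ i, |a i|) ^ p)) := by
  set S := ∑ i, |a i| ^ p
  set M := ⨆ i, |a i|
  have hp0 : 0 < p := one_pos.trans_le hp
  obtain ⟨i₀, hi₀⟩ := Function.ne_iff.1 ha
  have haM (i) : |a i| ≤ M := le_ciSup (f := fun i => |a i|) (Finite.bddAbove_range _) i
  have hM : 0 < M := (abs_pos.2 hi₀).trans_le (haM i₀)
  have hS : 0 < S := (Real.rpow_pos_of_pos (abs_pos.2 hi₀) p).trans_le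
    (single_le_sum (f := fun i => |a i| ^ p) (fun i _ => by positivity) (mem_univ i₀))
  have hk : (c * S ^ (1 / p) / M) ^ p * M ^ p = c ^ p * S := by
    rw [← Real.mul_rpow (by positivity) hM.le, div_mul_cancel₀ _ hM.ne',
      Real.mul_rpow hc.le (by positivity), ← Real.rpow_mul hS.le, one_div_mul_cancel hp0.ne',
      Real.rpow_one]
  have hkW : 8 * (c * S ^ (1 / p) / M) ^ p * M ^ p ≤ c₄ * S := by
    rw [mul_assoc, hk]
    nlinarith [Real.rpow_le_self_of_le_one hc.le hc1 hp]
  refine le_trans (measure_mono fun ω hω => ?_) (hX.measure_sum_lt_le hc₄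
    (w := fun i => |a i| ^ p) (fun i => by positivity) (by positivity)
    (fun i => Real.rpow_le_rpow (abs_nonneg _) (haM i) hp0.le) (by positivity) hkW
    (by positivity) hε1 hp0.le hy hyc)
  have hω' := le_rpow_mul_of_rpow_one_div_le (by positivity) hS.le hε.le hp0 hω
  have h32 : (32 : ℝ) ≤ 32 ^ p := Real.self_le_rpow_of_one_le (by norm_num) hp
  simp only [abs_mul, Real.mul_rpow (abs_nonneg _) (abs_nonneg _)] at hω'
  have hεS : 0 < ε ^ p * S := mul_pos (Real.rpow_pos_of_pos hε p) hS
  rw [Set.mem_ofPred_eq, Real.mul_rpow (by norm_num) hε.le]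
  change _ < 32 ^ p * ε ^ p * S / 16
  nlinarith [mul_le_mul_of_nonneg_right h32 hεS.le]

/-- let `X = (x_1,...,x_n)` be a random vector whose coordinates satisfy the
coordinate small-ball property: for every `τ ⊂ {1,...,n}` and `ε ∈ (0,1)`,
`P(|{i ∈ τ : |x_i| ≥ ε}| ≤ |τ|/2) ≤ (c₃Lε)^{c₄|τ|}`.  Then there are constants `c₁, c₂ > 0`
such that for every `a ≠ 0` and `ε ∈ (0,1)`, with `k = (c₁‖a‖_p/‖a‖_∞)^p`,
`P(‖(a_i x_i)_i‖_p ≤ ε‖a‖_p) ≤ (c₂εL)^k`. -/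
theorem lp_small_ball_from_coordinate_small_ball (c₃ c₄ : ℝ) (hc₃ : 0 < c₃) (hc₄ : 0 < c₄) :
    ∃ c₁ c₂ : ℝ, 0 < c₁ ∧ 0 < c₂ ∧
      ∀ (n : ℕ) (_ : 0 < n) (Ω : Type) (_ : MeasurableSpace Ω) (μ : Measure Ω)
        (_ : IsProbabilityMeasure μ) (X : Ω → Fin n → ℝ) (_ : Measurable X)
        (L : ℝ), 1 ≤ L →
        (∀ (τ : Finset (Fin n)) (ε : ℝ), 0 < ε → ε < 1 →
          μ {ω | (Set.ncard {i : Fin n | i ∈ τ ∧ ε ≤ |X ω i|} : ℝ) ≤ (τ.card : ℝ) / 2} ≤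
            ENNReal.ofReal ((c₃ * L * ε) ^ (c₄ * (τ.card : ℝ)))) →
        ∀ (p : ℝ), 1 ≤ p → ∀ a : Fin n → ℝ, a ≠ 0 → ∀ ε : ℝ, 0 < ε → ε < 1 →
        μ {ω | (∑ i, |a i * X ω i| ^ p) ^ ((1 : ℝ) / p) ≤
            ε * (∑ i, |a i| ^ p) ^ ((1 : ℝ) / p)} ≤
          ENNReal.ofReal ((c₂ * ε * L) ^
            ((c₁ * (∑ i, |a i| ^ p) ^ ((1 : ℝ) / p) / ⨆ i, |a i|) ^ p)) := by
  refine ⟨min 1 (c₄ / 8), 32 * (c₃ * 2 ^ (2 / c₄) + 1), by positivity, by positivity, ?_⟩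
  intro n _ Ω _ μ _ X _ L hL hX p hp a ha ε hε _
  have hk : 0 ≤ (min 1 (c₄ / 8) * (∑ i, |a i| ^ p) ^ ((1 : ℝ) / p) / ⨆ i, |a i|) ^ p := by
    have := Real.iSup_nonneg fun i => abs_nonneg (a i)
    positivity
  rcases le_or_gt 1 (32 * (c₃ * 2 ^ (2 / c₄) + 1) * ε * L) with hs | hs
  · exact prob_le_one.trans (ENNReal.one_le_ofReal.2 (Real.one_le_rpow hs hk))
  have h2 : (1 : ℝ) ≤ 2 ^ (2 / c₄) := Real.one_le_rpow (by norm_num) (by positivity)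
  have hy : 0 < c₃ * L * (32 * ε) := by have := one_pos.trans_le hL; positivity
  refine (CoordinateSmallBall.measure_lpNorm_le (X := X) hX hc₄ (by positivity)
    (min_le_left _ _) (by linarith [min_le_right 1 (c₄ / 8)]) hp ha hε ?_ hy
    (rpow_le_half_of_mul_two_rpow_le_one hy.le hc₄ ?_)).trans
    (ENNReal.ofReal_le_ofReal (Real.rpow_le_rpow hy.le ?_ hk))
  · nlinarith
  · nlinarith
  · nlinarith
end
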